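/- arXiv:1702.04284 — 6 statements merged into one kernel-verified Lean document; each statement's English description precedes it below -/
import Mathlib

section
/- If ψ is a unit vector in the domain of a self-adjoint operator H on a separable Hilbert space, then the survival probability p(t) = |⟨ψ, exp(-itH)ψ⟩|² satisfies p(t) = 1 - t²·(‖Hψ‖² - ⟨ψ,Hψ⟩²) + o(t²) as t → 0. -/
open Filter Asymptotics NormedSpace Topology

/-!
With `B = -iH`, the amplitude `f t = ⟪ψ, exp (t B) ψ⟫` is smooth with `f' t = ⟪ψ, exp (t B) (B ψ)⟫`,
so `f 0 = 1`, `f' 0 = -i⟪ψ, Hψ⟫` and `f'' 0 = -‖Hψ‖²`; self-adjointness makes `⟪ψ, Hψ⟫` real and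
`⟪ψ, H²ψ⟫ = ‖Hψ‖²`. In the second-order Taylor expansion of `‖f t‖²` the linear coefficient
`2 Re (conj (f 0) * f' 0)` then vanishes and the quadratic one is
`‖f' 0‖² + Re (conj (f 0) * f'' 0) = ⟪ψ, Hψ⟫² - ‖Hψ‖²`.
-/

theorem isLittleO_sub_taylor_two {E : Type*} [NormedAddCommGroup E] [NormedSpace ℝ E]
    {f f' : ℝ → E} {f'' : E} {x₀ : ℝ} (hf : ∀ x, HasDerivAt f (f' x) x)
    (hf' : HasDerivAt f' f'' x₀) :
    (fun x => f x - (f x₀ + (x - x₀) • f' x₀ + ((x - x₀) ^ 2 / 2) • f''))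
      =o[𝓝 x₀] fun x => (x - x₀) ^ 2 := by
  have hr : ∀ x, HasDerivAt (fun x => f x - (f x₀ + (x - x₀) • f' x₀ + ((x - x₀) ^ 2 / 2) • f''))
      (f' x - f' x₀ - (x - x₀) • f'') x := fun x =>
    ((hf x).sub (((hasDerivAt_id x).sub_const x₀).smul_const (f' x₀) |>.const_add (f x₀)
      |>.add ((((hasDerivAt_id x).sub_const x₀).pow 2).div_const 2 |>.smul_const f''))).congr_deriv
      (by simp only [id_eq]; module)
  have hr' : (fun x => f' x - f' x₀ - (x - x₀) • f'') =o[𝓝[Set.univ] x₀]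
      fun x => (x - x₀) ^ 1 := by
    simpa using hasDerivAt_iff_isLittleO.mp hf'
  simpa using Convex.isLittleO_pow_succ_real convex_univ trivial
    (fun x _ => (hr x).hasDerivWithinAt) hr'

theorem isLittleO_norm_sq_sub_taylor_two {F : Type*} [NormedAddCommGroup F]
    [InnerProductSpace ℝ F] {g g' : ℝ → F} {g'' : F} {x₀ : ℝ} (hg : ∀ x, HasDerivAt g (g' x) x)
    (hg' : HasDerivAt g' g'' x₀) :
    (fun x => ‖g x‖ ^ 2 - (‖g x₀‖ ^ 2 + (x - x₀) * (2 * inner ℝ (g x₀) (g' x₀))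
        + (x - x₀) ^ 2 * (‖g' x₀‖ ^ 2 + inner ℝ (g x₀) g'')))
      =o[𝓝 x₀] fun x => (x - x₀) ^ 2 := by
  have h := isLittleO_sub_taylor_two (fun x => (hg x).norm_sq)
    (((hg x₀).inner ℝ hg').const_mul 2)
  refine h.congr_left fun x => ?_
  rw [real_inner_self_eq_norm_sq, smul_eq_mul, smul_eq_mul]
  ring

theorem hasDerivAt_inner_exp_smul_apply {E : Type*} [NormedAddCommGroup E]
    [InnerProductSpace ℂ E] [CompleteSpace E] (B : E →L[ℂ] E) (φ ψ : E) (t : ℝ) :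
    HasDerivAt (fun s : ℝ => inner ℂ φ (exp (s • B) ψ)) (inner ℂ φ (exp (t • B) (B ψ))) t := by
  let L : (E →L[ℂ] E) →L[ℂ] ℂ := (innerSL ℂ φ).comp (ContinuousLinearMap.apply ℂ E ψ)
  exact (L.restrictScalars ℝ).hasFDerivAt.comp_hasDerivAt t (hasDerivAt_exp_smul_const B t)

/-- Short-time expansion of the survival probability:
`p t = 1 - t² (‖Hψ‖² - ⟨ψ,Hψ⟩²) + o(t²)` as `t → 0`. -/
theorem survival_probability_short_time
    {E : Type*} [NormedAddCommGroup E] [InnerProductSpace ℂ E] [CompleteSpace E]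
    (H : E →L[ℂ] E) (hH : IsSelfAdjoint H) (ψ : E) (hψ : ‖ψ‖ = 1) :
    (fun t : ℝ =>
        ‖(inner ℂ ψ ((NormedSpace.exp ((-(t : ℂ) * Complex.I) • H)) ψ) : ℂ)‖ ^ 2
          - (1 - t ^ 2 * (‖H ψ‖ ^ 2 - (Complex.re (inner ℂ ψ (H ψ) : ℂ)) ^ 2)))
      =o[nhds (0 : ℝ)] fun t : ℝ => t ^ 2 := by
  set B : E →L[ℂ] E := (-Complex.I) • H
  have hexp (t : ℝ) : exp ((-(t : ℂ) * Complex.I) • H) = exp (t • B) := by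
    rw [← Complex.coe_smul, smul_smul, neg_mul, mul_neg]
  set a : ℝ := (inner ℂ ψ (H ψ) : ℂ).re
  have hψψ : (inner ℂ ψ ψ : ℂ) = 1 := by
    rw [inner_self_eq_norm_sq_to_K, hψ]
    norm_num
  have hB : (inner ℂ ψ (B ψ) : ℂ) = -Complex.I * a := by
    rw [smul_apply, inner_smul_right]
    exact congrArg _ (hH.isSymmetric.coe_re_inner_self_apply ψ).symm
  have hHH : (inner ℂ ψ (H (H ψ)) : ℂ) = (‖H ψ‖ : ℂ) ^ 2 :=
    (hH.isSymmetric ψ (H ψ)).symm.trans (inner_self_eq_norm_sq_to_K _)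
  have hBB : (inner ℂ ψ (B (B ψ)) : ℂ) = -(‖H ψ‖ : ℂ) ^ 2 := by
    rw [smul_apply, smul_apply, map_smul, inner_smul_right, inner_smul_right, hHH,
      ← mul_assoc, neg_mul_neg, Complex.I_mul_I, neg_one_mul]
  have h := isLittleO_norm_sq_sub_taylor_two (x₀ := 0)
    (fun t => hasDerivAt_inner_exp_smul_apply B ψ ψ t)
    (hasDerivAt_inner_exp_smul_apply B ψ (B ψ) 0)
  simp only [sub_zero] at h
  refine h.congr_left fun t => ?_
  simp only [hexp, zero_smul, exp_zero, one_apply_eq_self, hψψ, hB, hBB, Complex.inner]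
  simp only [norm_one, one_pow, neg_mul, map_one, mul_one, Complex.neg_re, Complex.mul_re,
    Complex.I_re, Complex.ofReal_re, zero_mul, Complex.I_im, Complex.ofReal_im, mul_zero, sub_self,
    neg_zero, add_zero, norm_neg, Complex.norm_mul, Complex.norm_I, Complex.norm_real,
    Real.norm_eq_abs, one_mul, sq_abs, ← Complex.ofReal_pow, sub_right_inj]
  ring
end

section
/- For a unit vector ψ in the domain of a self-adjoint operator H, the Zeno product formula p^(N)(t) = |⟨ψ, exp(-i(t/N)H)ψ⟩|^{2N} converges to 1 as N → ∞, for every fixed t ∈ ℝ (quantum Zeno effect). -/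
/-!
The survival probability `p s = ‖⟪ψ, exp (-i s H) ψ⟫‖ ^ 2` satisfies `p 0 = 1`, and its derivative
at `0` is `2 Re (‖ψ‖² · (-i ⟪ψ, H ψ⟫)) = 0` because the expectation value `⟪ψ, H ψ⟫` of a
self-adjoint operator is real. Hence `p (t / N) = 1 + o(1 / N)`, and `p (t / N) ^ N → exp 0 = 1`.
-/

open Filter Topology Complex

theorem tendsto_apply_div_pow_exp_of_hasDerivAt {f : ℝ → ℝ} {f' : ℝ} (hf : HasDerivAt f f' 0)
    (hf0 : f 0 = 1) (t : ℝ) :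
    Tendsto (fun N : ℕ => f (t / N) ^ N) atTop (𝓝 (Real.exp (f' * t))) := by
  have hft : HasDerivAt (fun s => f (t * s)) (f' * t) 0 :=
    hf.comp_of_eq 0 (hasDerivAt_const_mul t) (mul_zero t).symm
  have hslope := (hasDerivAt_iff_tendsto_slope_zero.mp hft).comp
    ((tendsto_inv_atTop_nhdsGT_zero.mono_right (nhdsGT_le_nhdsNE 0)).comp
      tendsto_natCast_atTop_atTop)
  refine (Real.tendsto_one_add_pow_exp_of_tendsto (g := fun N => f (t / N) - 1)
    (hslope.congr fun N => ?_)).congr fun N => ?_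
  · simp [hf0, div_eq_mul_inv]
  · simp

theorem hasDerivAt_exp_neg_ofReal_mul_I_smul {𝔸 : Type*} [NormedRing 𝔸] [NormedAlgebra ℂ 𝔸]
    [CompleteSpace 𝔸] (A : 𝔸) (s : ℝ) :
    HasDerivAt (fun u : ℝ => NormedSpace.exp ((-(u : ℂ) * I) • A))
      (NormedSpace.exp ((-(s : ℂ) * I) • A) * (-I) • A) s := by
  simpa [← Complex.coe_smul, smul_smul, mul_comm] using
    hasDerivAt_exp_smul_const (𝕂 := ℝ) ((-I) • A) s

section SurvivalProbability

variable {E : Type*} [NormedAddCommGroup E] [InnerProductSpace ℂ E] [CompleteSpace E]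

theorem hasDerivAt_inner_exp_neg_I_smul_apply_zero (H : E →L[ℂ] E) (ψ : E) :
    HasDerivAt (fun s : ℝ => inner ℂ ψ (NormedSpace.exp ((-(s : ℂ) * I) • H) ψ))
      (-I * inner ℂ ψ (H ψ)) 0 := by
  let L : (E →L[ℂ] E) →L[ℝ] ℂ :=
    ((innerSL ℂ ψ).comp (ContinuousLinearMap.apply ℂ E ψ)).restrictScalars ℝ
  exact (L.hasFDerivAt.comp_hasDerivAt (0 : ℝ)
    (hasDerivAt_exp_neg_ofReal_mul_I_smul H 0)).congr_deriv (by simp [L, inner_smul_right])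

theorem hasDerivAt_norm_inner_exp_neg_I_smul_apply_sq_zero (H : E →L[ℂ] E) (hH : IsSelfAdjoint H)
    (ψ : E) :
    HasDerivAt (fun s : ℝ => ‖inner ℂ ψ (NormedSpace.exp ((-(s : ℂ) * I) • H) ψ)‖ ^ 2) 0 0 := by
  have hreal : (inner ℂ ψ (H ψ)).im = 0 := hH.isSymmetric.im_inner_self_apply ψ
  convert (hasDerivAt_inner_exp_neg_I_smul_apply_zero H ψ).norm_sq using 1
  simp [Complex.inner, hreal, ← ofReal_pow]

end SurvivalProbability

/-- Quantum Zeno effect: the Zeno product formula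
`p^(N)(t) = |⟨ψ, exp(-i(t/N)H)ψ⟩|^(2N)` tends to `1` as `N → ∞`, for every fixed `t`. -/
theorem quantum_zeno_effect
    {E : Type*} [NormedAddCommGroup E] [InnerProductSpace ℂ E] [CompleteSpace E]
    (H : E →L[ℂ] E) (hH : IsSelfAdjoint H) (ψ : E) (hψ : ‖ψ‖ = 1) (t : ℝ) :
    Tendsto
      (fun N : ℕ =>
        ‖(inner ℂ ψ ((NormedSpace.exp (((-(t / N : ℂ)) * Complex.I) • H)) ψ) : ℂ)‖ ^ (2 * N))
      atTop (nhds 1) := by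
  have hsurvival := tendsto_apply_div_pow_exp_of_hasDerivAt
    (hasDerivAt_norm_inner_exp_neg_I_smul_apply_sq_zero H hH ψ)
    (by simp [inner_self_eq_norm_sq_to_K, hψ]) t
  simpa [pow_mul] using hsurvival
end

section
/- For a unit vector ψ in the domain of a self-adjoint operator H, with Zeno rate σ² = ‖Hψ‖² - ⟨ψ,Hψ⟩², the product formula p_{N,1/2}(τ) = |⟨ψ, exp(-iτN^{-1/2}H)ψ⟩|^{2N} converges as N → ∞ to exp(-σ²τ²), uniformly in τ on compact subsets of ℝ. -/
/-!
Unitarity of `e^{-itH}` keeps `|⟨ψ, e^{-itH}ψ⟩|²` in `[0, 1]`, and the second-order Taylor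
expansion of the exponential gives `|⟨ψ, e^{-itH}ψ⟩|² = 1 - σ²t² + O(t³) = e^{-σ²t²} + O(t³)`.
At `t = τ/√N` the `N`-th power multiplies the error by at most `N`, since
`|xᴺ - yᴺ| ≤ N |x - y|` on `[0, 1]`, so the total error is `O(N · N^{-3/2}) = O(N^{-1/2})`
uniformly for `τ` in a compact set, while `(e^{-σ²τ²/N})ᴺ = e^{-σ²τ²}`.
-/

open Filter Topology Asymptotics NormedSpace Complex

theorem isBigO_exp_smul_sub_quadratic {𝕂 𝔸 : Type*} [RCLike 𝕂] [NormedRing 𝔸]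
    [NormedAlgebra 𝕂 𝔸] [CompleteSpace 𝔸] (A : 𝔸) :
    (fun t : 𝕂 => exp (t • A) - (1 + t • A + (t ^ 2 / 2) • A ^ 2)) =O[𝓝 0] fun t => t ^ 3 := by
  have hexp := (hasFPowerSeriesAt_exp_zero_of_radius_pos (𝕂 := 𝕂) (𝔸 := 𝔸)
    (by simp [expSeries_radius_eq_top])).isBigO_sub_partialSum_pow 3
  have hlin : Tendsto (fun t : 𝕂 => t • A) (𝓝 0) (𝓝 0) := by
    simpa using (tendsto_id (x := 𝓝 (0 : 𝕂))).smul_const A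
  refine (hexp.comp_tendsto hlin).congr_left (fun t => ?_) |>.trans
    (isBigO_of_le' (c := ‖A‖ ^ 3) _ fun t => ?_)
  · simp [FormalMultilinearSeries.partialSum, Finset.sum_range_succ, expSeries_apply_eq, smul_pow,
      smul_smul, div_eq_inv_mul]
  · simp [norm_smul, mul_pow, mul_comm]

theorem isBigO_exp_neg_mul_sq_sub (c : ℝ) :
    (fun t : ℝ => Real.exp (-(c * t ^ 2)) - (1 - c * t ^ 2)) =O[𝓝 0] fun t => t ^ 3 := by
  have hsmall : ∀ᶠ t : ℝ in 𝓝 0, |-(c * t ^ 2)| ≤ 1 := by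
    have : Tendsto (fun t : ℝ => |-(c * t ^ 2)|) (𝓝 0) (𝓝 0) := by
      simpa using ((continuous_const.mul (continuous_pow 2)).neg.abs.tendsto (0 : ℝ))
    exact this.eventually (ge_mem_nhds one_pos)
  refine (IsBigO.of_bound 1 ?_).trans
    ((isLittleO_pow_pow (by norm_num : 3 < 4)).isBigO.const_mul_left (c ^ 2))
  filter_upwards [hsmall] with t ht
  have := Real.abs_exp_sub_one_sub_id_le ht
  simp only [Real.norm_eq_abs, one_mul]
  calc _ = |Real.exp (-(c * t ^ 2)) - 1 - -(c * t ^ 2)| := by congr 1; ring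
    _ ≤ (-(c * t ^ 2)) ^ 2 := this
    _ = |c ^ 2 * t ^ 4| := by rw [abs_of_nonneg (by positivity)]; ring

theorem abs_pow_sub_pow_le_of_mem_Icc {x y : ℝ} (hx : x ∈ Set.Icc (0 : ℝ) 1)
    (hy : y ∈ Set.Icc (0 : ℝ) 1) (n : ℕ) : |x ^ n - y ^ n| ≤ n * |x - y| := by
  calc |x ^ n - y ^ n| ≤ |x - y| * n * max |x| |y| ^ (n - 1) := abs_pow_sub_pow_le x y n
    _ ≤ |x - y| * n * 1 := by
        gcongr
        exact pow_le_one₀ (by positivity)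
          (max_le ((abs_of_nonneg hx.1).trans_le hx.2) ((abs_of_nonneg hy.1).trans_le hy.2))
    _ = n * |x - y| := by ring

theorem natCast_mul_rpow_neg_half_sq {N : ℕ} (hN : 0 < N) :
    (N : ℝ) * ((N : ℝ) ^ (-(1 : ℝ) / 2)) ^ 2 = 1 := by
  rw [← Real.rpow_natCast, ← Real.rpow_mul (Nat.cast_nonneg N)]
  norm_num [Real.rpow_neg_one]
  field_simp

theorem abs_pow_rescaled_sub_exp_le {g : ℝ → ℝ} {c C δ : ℝ} (hc : 0 ≤ c)
    (hg : ∀ t, g t ∈ Set.Icc (0 : ℝ) 1)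
    (hbound : ∀ t, |t| < δ → |g t - Real.exp (-(c * t ^ 2))| ≤ C * |t| ^ 3)
    {N : ℕ} (hN : 0 < N) {τ : ℝ} (hτ : |τ| * (N : ℝ) ^ (-(1 : ℝ) / 2) < δ) :
    |g (τ * (N : ℝ) ^ (-(1 : ℝ) / 2)) ^ N - Real.exp (-(c * τ ^ 2))|
      ≤ C * |τ| ^ 3 * (N : ℝ) ^ (-(1 : ℝ) / 2) := by
  set r := (N : ℝ) ^ (-(1 : ℝ) / 2)
  have hr : 0 ≤ r := by positivity
  have hNr : (N : ℝ) * r ^ 2 = 1 := natCast_mul_rpow_neg_half_sq hN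
  have hexp : Real.exp (-(c * τ ^ 2)) = Real.exp (-(c * (τ * r) ^ 2)) ^ N := by
    rw [← Real.exp_nat_mul]
    congr 1
    linear_combination (c * τ ^ 2) * hNr
  have hexp_mem : Real.exp (-(c * (τ * r) ^ 2)) ∈ Set.Icc (0 : ℝ) 1 :=
    ⟨(Real.exp_pos _).le, Real.exp_le_one_iff.2 (by nlinarith [sq_nonneg (τ * r)])⟩
  rw [hexp]
  calc _ ≤ N * |g (τ * r) - Real.exp (-(c * (τ * r) ^ 2))| :=
        abs_pow_sub_pow_le_of_mem_Icc (hg _) hexp_mem N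
    _ ≤ N * (C * |τ * r| ^ 3) := by
        gcongr
        exact hbound _ (by rwa [abs_mul, abs_of_nonneg hr])
    _ = C * |τ| ^ 3 * r * (N * r ^ 2) := by rw [abs_mul, abs_of_nonneg hr]; ring
    _ = C * |τ| ^ 3 * r := by rw [hNr, mul_one]

theorem tendstoUniformlyOn_pow_rescaled_of_isBigO {g : ℝ → ℝ} {c : ℝ} (hc : 0 ≤ c)
    (hg : ∀ t, g t ∈ Set.Icc (0 : ℝ) 1)
    (hg_approx : (fun t => g t - (1 - c * t ^ 2)) =O[𝓝 0] fun t => t ^ 3)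
    {K : Set ℝ} (hK : IsCompact K) :
    TendstoUniformlyOn (fun (N : ℕ) (τ : ℝ) => g (τ * (N : ℝ) ^ (-(1 : ℝ) / 2)) ^ N)
      (fun τ => Real.exp (-(c * τ ^ 2))) atTop K := by
  have hgauss : (fun t => g t - Real.exp (-(c * t ^ 2))) =O[𝓝 0] fun t => t ^ 3 := by
    simpa using hg_approx.sub (isBigO_exp_neg_mul_sq_sub c)
  obtain ⟨C, hC, hCbound⟩ := hgauss.exists_pos
  obtain ⟨δ, hδ, hCδ⟩ := Metric.eventually_nhds_iff.1 hCbound.bound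
  obtain ⟨M, hM⟩ := hK.isBounded.exists_norm_le
  have hr_lim : Tendsto (fun N : ℕ => (N : ℝ) ^ (-(1 : ℝ) / 2)) atTop (𝓝 0) := by
    simpa [Function.comp_def, neg_div] using
      (tendsto_rpow_neg_atTop (by norm_num : (0 : ℝ) < 1 / 2)).comp tendsto_natCast_atTop_atTop
  rw [Metric.tendstoUniformlyOn_iff]
  intro ε hε
  have hMδ : ∀ᶠ N : ℕ in atTop, M * (N : ℝ) ^ (-(1 : ℝ) / 2) < δ := by
    simpa using (hr_lim.const_mul M).eventually (gt_mem_nhds (show M * 0 < δ by simpa))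
  have hMε : ∀ᶠ N : ℕ in atTop, C * M ^ 3 * (N : ℝ) ^ (-(1 : ℝ) / 2) < ε := by
    simpa using (hr_lim.const_mul (C * M ^ 3)).eventually
      (gt_mem_nhds (show C * M ^ 3 * 0 < ε by simpa))
  filter_upwards [eventually_gt_atTop 0, hMδ, hMε] with N hN hMδ hMε τ hτ
  have hτM : |τ| ≤ M := hM τ hτ
  have hr : 0 ≤ (N : ℝ) ^ (-(1 : ℝ) / 2) := by positivity
  have hbound := abs_pow_rescaled_sub_exp_le hc hg
    (fun t ht => by simpa using hCδ (by simpa using ht))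
    hN ((mul_le_mul_of_nonneg_right hτM hr).trans_lt hMδ)
  rw [dist_comm, Real.dist_eq]
  calc _ ≤ C * |τ| ^ 3 * (N : ℝ) ^ (-(1 : ℝ) / 2) := hbound
    _ ≤ C * M ^ 3 * (N : ℝ) ^ (-(1 : ℝ) / 2) := by gcongr
    _ < ε := hMε

theorem isBigO_norm_sq_sub_of_isBigO {f : ℝ → ℂ} {α β : ℝ}
    (hf : (fun t => f t - (1 - α * t * I - β * t ^ 2 / 2)) =O[𝓝 0] fun t => t ^ 3) :
    (fun t => ‖f t‖ ^ 2 - (1 - (β - α ^ 2) * t ^ 2)) =O[𝓝 0] fun t => t ^ 3 := by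
  set z : ℝ → ℂ := fun t => 1 - α * t * I - β * t ^ 2 / 2
  have hz_cont : Continuous z := by fun_prop
  have hz_sq : ∀ t, ‖z t‖ ^ 2 = 1 - (β - α ^ 2) * t ^ 2 + β ^ 2 / 4 * t ^ 4 := by
    intro t
    have hz : z t = ((1 - β * t ^ 2 / 2 : ℝ) : ℂ) + ((-(α * t) : ℝ) : ℂ) * I := by
      simp only [z]; push_cast; ring
    rw [hz, Complex.sq_norm, Complex.normSq_add_mul_I]
    ring
  have hf_lim : Tendsto f (𝓝 0) (𝓝 1) := by
    have hsmall := hf.trans_tendsto (by simpa using ((continuous_pow 3).tendsto (0 : ℝ)))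
    simpa [z] using hsmall.add (hz_cont.tendsto 0)
  have hdiff : (fun t => ‖f t‖ - ‖z t‖) =O[𝓝 0] fun t => t ^ 3 :=
    (isBigO_of_le _ fun t => by simpa using abs_norm_sub_norm_le (f t) (z t)).trans hf
  have hsum : (fun t => ‖f t‖ + ‖z t‖) =O[𝓝 0] fun _ => (1 : ℝ) :=
    (hf_lim.norm.add (hz_cont.tendsto 0).norm).isBigO_one ℝ
  have hquartic : (fun t : ℝ => β ^ 2 / 4 * t ^ 4) =O[𝓝 0] fun t => t ^ 3 :=
    (isLittleO_pow_pow (by norm_num : 3 < 4)).isBigO.const_mul_left _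
  refine (((hdiff.mul hsum).congr_right fun t => mul_one _).add hquartic).congr_left fun t => ?_
  linear_combination -hz_sq t

section
variable {E : Type*} [NormedAddCommGroup E] [InnerProductSpace ℂ E] [CompleteSpace E]

noncomputable def survivalAmplitude (H : E →L[ℂ] E) (ψ : E) (t : ℝ) : ℂ :=
  inner ℂ ψ (exp (((-(t : ℂ)) * I) • H) ψ)

theorem norm_survivalAmplitude_le {H : E →L[ℂ] E} (hH : IsSelfAdjoint H) (ψ : E) (t : ℝ) :
    ‖survivalAmplitude H ψ t‖ ≤ ‖ψ‖ ^ 2 := by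
  have hskew : ((-(t : ℂ)) * I) • H ∈ skewAdjoint (E →L[ℂ] E) :=
    hH.smul_mem_skewAdjoint (by simp [skewAdjoint.mem_iff])
  have hU : exp (((-(t : ℂ)) * I) • H) ∈ unitary (E →L[ℂ] E) :=
    let +nondep : NormedAlgebra ℚ (E →L[ℂ] E) := .restrictScalars ℚ ℂ _
    exp_mem_unitary_of_mem_skewAdjoint hskew
  calc ‖survivalAmplitude H ψ t‖ ≤ ‖ψ‖ * ‖exp (((-(t : ℂ)) * I) • H) ψ‖ :=
        norm_inner_le_norm _ _
    _ = ‖ψ‖ ^ 2 := by rw [ContinuousLinearMap.norm_map_of_mem_unitary hU, sq]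

theorem isBigO_survivalAmplitude_sub_quadratic {H : E →L[ℂ] E} (hH : IsSelfAdjoint H) {ψ : E}
    (hψ : ‖ψ‖ = 1) :
    (fun t : ℝ => survivalAmplitude H ψ t -
      (1 - (inner ℂ ψ (H ψ)).re * t * I - ((‖H ψ‖ ^ 2 : ℝ) : ℂ) * t ^ 2 / 2))
      =O[𝓝 0] fun t => t ^ 3 := by
  have hmean : ((inner ℂ ψ (H ψ)).re : ℂ) = inner ℂ ψ (H ψ) :=
    hH.isSymmetric.coe_re_inner_self_apply ψ
  have hsq : inner ℂ ψ ((H ^ 2) ψ) = ((‖H ψ‖ ^ 2 : ℝ) : ℂ) := by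
    rw [sq, mul_apply_eq_comp, ← hH.isSymmetric.apply_clm, inner_self_eq_norm_sq_to_K]
    push_cast; rfl
  let expectation : (E →L[ℂ] E) →L[ℂ] ℂ := (innerSL ℂ ψ).comp (.apply ℂ E ψ)
  have hI : Tendsto (fun t : ℝ => (-(t : ℂ)) * I) (𝓝 0) (𝓝 0) := by
    have : Continuous fun t : ℝ => (-(t : ℂ)) * I := by fun_prop
    simpa using this.tendsto 0
  have h := ((expectation.isBigO_comp _ (𝓝 0)).trans
    (isBigO_exp_smul_sub_quadratic H)).comp_tendsto hI
  refine (h.congr_left fun t => ?_).trans (isBigO_of_le _ fun t => ?_)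
  · simp only [expectation, survivalAmplitude, Function.comp_apply,
      ContinuousLinearMap.comp_apply, ContinuousLinearMap.apply_apply, coe_innerSL_apply,
      sub_apply, add_apply, one_apply_eq_self, smul_apply, inner_sub_right, inner_add_right,
      inner_smul_right, inner_self_eq_norm_sq_to_K, hψ, hmean, hsq]
    push_cast
    linear_combination (-(t : ℂ) ^ 2 * ‖H ψ‖ ^ 2 / 2) * I_sq
  · simp

end

/-- Critical exponent `α = 1/2`: `p_{N,1/2}(τ) = |⟨ψ, exp(-iτN^(-1/2)H)ψ⟩|^(2N)` converges
to the Gaussian `exp(-σ²τ²)`, with `σ² = ‖Hψ‖² - ⟨ψ,Hψ⟩²`, uniformly on compacts. -/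
theorem zeno_critical_exponent
    {E : Type*} [NormedAddCommGroup E] [InnerProductSpace ℂ E] [CompleteSpace E]
    (H : E →L[ℂ] E) (hH : IsSelfAdjoint H) (ψ : E) (hψ : ‖ψ‖ = 1)
    (σsq : ℝ) (hσ : σsq = ‖H ψ‖ ^ 2 - (Complex.re (inner ℂ ψ (H ψ) : ℂ)) ^ 2)
    (K : Set ℝ) (hK : IsCompact K) :
    TendstoUniformlyOn
      (fun (N : ℕ) (τ : ℝ) =>
        ‖
            (inner ℂ ψ
              ((NormedSpace.exp
                  (((-(τ * (N : ℝ) ^ (-(1 : ℝ) / 2) : ℝ) : ℂ) * Complex.I) • H)) ψ) : ℂ)‖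
          ^ (2 * N))
      (fun τ => Real.exp (-(σsq * τ ^ 2))) atTop K := by
  have hσ_nonneg : 0 ≤ σsq := by
    rw [hσ, sub_nonneg, ← sq_abs]
    gcongr
    calc |(inner ℂ ψ (H ψ)).re| ≤ ‖inner ℂ ψ (H ψ)‖ := abs_re_le_norm _
      _ ≤ ‖ψ‖ * ‖H ψ‖ := norm_inner_le_norm _ _
      _ = ‖H ψ‖ := by rw [hψ, one_mul]
  have hprob : ∀ t, ‖survivalAmplitude H ψ t‖ ^ 2 ∈ Set.Icc (0 : ℝ) 1 := fun t =>
    ⟨by positivity, pow_le_one₀ (norm_nonneg _)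
      ((norm_survivalAmplitude_le hH ψ t).trans_eq (by rw [hψ, one_pow]))⟩
  have happrox : (fun t => ‖survivalAmplitude H ψ t‖ ^ 2 - (1 - σsq * t ^ 2)) =O[𝓝 0]
      fun t => t ^ 3 := by
    rw [hσ]
    exact isBigO_norm_sq_sub_of_isBigO (isBigO_survivalAmplitude_sub_quadratic hH hψ)
  simpa only [pow_mul, survivalAmplitude] using
    tendstoUniformlyOn_pow_rescaled_of_isBigO hσ_nonneg hprob happrox hK
end

section
/- Let ψ be a unit vector in the absolutely continuous subspace of a self-adjoint operator H, and α > 1. Then p_{N,α}(τ) = |⟨ψ, exp(-iτN^{α-1}H)ψ⟩|^{2N} converges to 0 as N → ∞, uniformly in τ on compact subsets of ℝ \ {0}. -/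
/-!
By hypothesis the amplitude `⟨ψ, e^{-itH} ψ⟩` is the Fourier transform of the spectral
density, so it tends to `0` as `|t| → ∞` (Riemann–Lebesgue). For `τ` in a compact set
avoiding `0` the time `τ N^(α-1)` is eventually as large as we like, uniformly in `τ`, so the
amplitude is eventually uniformly below any `δ < 1`, and then so is its `2N`-th power.
-/

open Filter MeasureTheory Topology Bornology

theorem tendsto_integral_exp_neg_mul_I_smul_cobounded {E : Type*} [NormedAddCommGroup E]
    [NormedSpace ℂ E] (f : ℝ → E) :
    Tendsto (fun t : ℝ => ∫ x : ℝ, Complex.exp (-Complex.I * t * x) • f x)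
      (cobounded ℝ) (𝓝 0) := by
  have hscale : Tendsto (fun t : ℝ => t * (2 * Real.pi)⁻¹) (cocompact ℝ) (cocompact ℝ) :=
    (Homeomorph.mulRight₀ _ (by positivity)).toCocompactMap.cocompact_tendsto'
  rw [Metric.cobounded_eq_cocompact]
  refine ((Real.tendsto_integral_exp_smul_cocompact f).comp hscale).congr fun t => ?_
  refine integral_congr_ae (Eventually.of_forall fun x => ?_)
  have hπ : (Real.pi : ℂ) ≠ 0 := by exact_mod_cast Real.pi_ne_zero
  simp only [Circle.smul_def, Real.fourierChar_apply]
  congr 2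
  push_cast
  field_simp

theorem exists_pos_le_norm_of_isCompact {E : Type*} [NormedAddCommGroup E] {K : Set E}
    (hK : IsCompact K) (hK0 : 0 ∉ K) : ∃ ε > 0, ∀ x ∈ K, ε ≤ ‖x‖ := by
  obtain ⟨ε, hε, hsub⟩ := hK.exists_thickening_subset_open isOpen_compl_singleton
    (Set.subset_compl_singleton_iff.mpr hK0)
  refine ⟨ε, hε, fun x hx => not_lt.mp fun hlt => hsub ?_ rfl⟩
  exact Metric.mem_thickening_iff.mpr ⟨x, hx, by simpa [dist_comm] using hlt⟩

section
variable {ι 𝕜 : Type*} [NormedDivisionRing 𝕜] {l : Filter ι} {s : ι → 𝕜} {K : Set 𝕜}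

theorem tendsto_mul_cobounded_of_isCompact (hs : Tendsto s l (cobounded 𝕜))
    (hK : IsCompact K) (hK0 : 0 ∉ K) :
    Tendsto (fun q : ι × 𝕜 => q.2 * s q.1) (l ×ˢ 𝓟 K) (cobounded 𝕜) := by
  obtain ⟨ε, hε, hεK⟩ := exists_pos_le_norm_of_isCompact hK hK0
  rw [← tendsto_norm_atTop_iff_cobounded] at hs ⊢
  refine tendsto_atTop_mono' _ ?_ ((hs.const_mul_atTop hε).comp tendsto_fst)
  filter_upwards [prod_mem_prod univ_mem (mem_principal_self K)] with q hq
  rw [norm_mul]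
  exact mul_le_mul_of_nonneg_right (hεK _ hq.2) (norm_nonneg _)

theorem tendstoUniformlyOn_comp_mul_of_tendsto_cobounded {β : Type*} [UniformSpace β]
    {f : 𝕜 → β} {c : β} (hf : Tendsto f (cobounded 𝕜) (𝓝 c)) (hs : Tendsto s l (cobounded 𝕜))
    (hK : IsCompact K) (hK0 : 0 ∉ K) :
    TendstoUniformlyOn (fun n x => f (x * s n)) (fun _ => c) l K :=
  tendsto_prod_principal_iff.mp (hf.comp (tendsto_mul_cobounded_of_isCompact hs hK hK0))

end

theorem TendstoUniformlyOn.norm_pow_of_tendsto_zero {ι α E : Type*} [SeminormedAddCommGroup E]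
    {F : ι → α → E} {l : Filter ι} {K : Set α} {k : ι → ℕ}
    (hF : TendstoUniformlyOn F (fun _ => 0) l K) (hk : ∀ᶠ n in l, k n ≠ 0) :
    TendstoUniformlyOn (fun n x => ‖F n x‖ ^ k n) (fun _ => 0) l K := by
  rw [Metric.tendstoUniformlyOn_iff] at hF ⊢
  intro δ hδ
  filter_upwards [hF (min δ 1) (lt_min hδ one_pos), hk] with n hn hkn x hx
  have hsmall : ‖F n x‖ < min δ 1 := by simpa using hn x hx
  rw [dist_zero_left, Real.norm_of_nonneg (by positivity)]
  calc ‖F n x‖ ^ k n ≤ ‖F n x‖ :=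
        pow_le_of_le_one (norm_nonneg _) (hsmall.le.trans (min_le_right _ _)) hkn
    _ < δ := hsmall.trans_le (min_le_left _ _)

theorem zeno_large_exponent_ac_uniform_general
    {E : Type*} [NormedAddCommGroup E] [InnerProductSpace ℂ E]
    (H : E →L[ℂ] E) (ψ : E)
    (ρ : ℝ → ℝ)
    (hac : ∀ t : ℝ,
      (inner ℂ ψ ((NormedSpace.exp (((-t : ℂ) * Complex.I) • H)) ψ) : ℂ)
        = ∫ lam : ℝ, Complex.exp (-Complex.I * t * lam) * (ρ lam : ℂ))
    (α : ℝ) (hα : 1 < α)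
    (K : Set ℝ) (hK : IsCompact K) (hK0 : K ⊆ {0}ᶜ) :
    TendstoUniformlyOn
      (fun (N : ℕ) (τ : ℝ) =>
        ‖
            (inner ℂ ψ
              ((NormedSpace.exp
                  (((-(τ * (N : ℝ) ^ (α - 1) : ℝ) : ℂ) * Complex.I) • H)) ψ) : ℂ)‖
          ^ (2 * N))
      (fun _ => (0 : ℝ)) atTop K := by
  have hscale : Tendsto (fun N : ℕ => (N : ℝ) ^ (α - 1)) atTop (cobounded ℝ) :=
    ((tendsto_rpow_atTop (sub_pos.mpr hα)).comp tendsto_natCast_atTop_atTop).mono_right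
      (atTop_le_cocompact.trans_eq Metric.cobounded_eq_cocompact.symm)
  have hamplitude := tendstoUniformlyOn_comp_mul_of_tendsto_cobounded
    (tendsto_integral_exp_neg_mul_I_smul_cobounded fun x => (ρ x : ℂ)) hscale hK
    (Set.subset_compl_singleton_iff.mp hK0)
  have hpow := hamplitude.norm_pow_of_tendsto_zero (k := fun N => 2 * N)
    (eventually_ne_atTop 0 |>.mono fun N hN => by positivity)
  simpa only [Complex.ofReal_neg, hac, smul_eq_mul] using hpow

/-- For `ψ` in the absolutely continuous subspace of `H` (spectral measure with `L¹` density
`ρ`) and `α > 1`, `p_{N,α}(τ) = |⟨ψ, exp(-iτN^(α-1)H)ψ⟩|^(2N)` converges to `0`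
uniformly in `τ` on compact subsets of `ℝ \ {0}`. -/
theorem zeno_large_exponent_ac_uniform
    {E : Type*} [NormedAddCommGroup E] [InnerProductSpace ℂ E] [CompleteSpace E]
    (H : E →L[ℂ] E) (hH : IsSelfAdjoint H) (ψ : E) (hψ : ‖ψ‖ = 1)
    (ρ : ℝ → ℝ) (hρ : Integrable ρ) (hρ0 : 0 ≤ ρ)
    (hac : ∀ t : ℝ,
      (inner ℂ ψ ((NormedSpace.exp (((-t : ℂ) * Complex.I) • H)) ψ) : ℂ)
        = ∫ lam : ℝ, Complex.exp (-Complex.I * t * lam) * (ρ lam : ℂ))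
    (α : ℝ) (hα : 1 < α)
    (K : Set ℝ) (hK : IsCompact K) (hK0 : K ⊆ {0}ᶜ) :
    TendstoUniformlyOn
      (fun (N : ℕ) (τ : ℝ) =>
        ‖
            (inner ℂ ψ
              ((NormedSpace.exp
                  (((-(τ * (N : ℝ) ^ (α - 1) : ℝ) : ℂ) * Complex.I) • H)) ψ) : ℂ)‖
          ^ (2 * N))
      (fun _ => (0 : ℝ)) atTop K :=
  zeno_large_exponent_ac_uniform_general H ψ ρ hac α hα K hK hK0
end

section
/- Suppose p(τ₀) = |⟨ψ, exp(-iτ₀H)ψ⟩|² = 1 for some τ₀ ≠ 0, and let α > 1 be rational. Then for every integer M, limsup_{N→∞} p_{N,α}(Mτ₀) = 1, where p_{N,α}(τ) = p(τN^{α-1})^N. -/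
/-!
Returning to itself at time `τ₀` with probability one forces `ψ` to be an eigenvector of the
unitary `exp(-iτ₀H)`, so `p(kτ₀) = 1` for every integer `k`. Writing `α - 1 = a / b`, along the
subsequence `N = m ^ b` the rescaled time `Mτ₀N^(α-1) = M m^a τ₀` is such a multiple, hence
`p_{N,α}(Mτ₀) = 1` infinitely often, while `p_{N,α} ≤ 1` always.
-/

open Filter

open scoped InnerProductSpace

section CauchySchwarz

variable {𝕜 E : Type*} [RCLike 𝕜] [NormedAddCommGroup E] [InnerProductSpace 𝕜 E]

theorem eq_inner_smul_of_norm_inner_eq_one {x y : E} (hx : ‖x‖ = 1)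
    (h : ‖⟪x, y⟫_𝕜‖ = 1) (hy : ‖y‖ = 1) : y = ⟪x, y⟫_𝕜 • x := by
  have hxy : ‖⟪x, y⟫_𝕜‖ = ‖x‖ * ‖y‖ := by rw [h, hx, hy, one_mul]
  have hx₀ : x ≠ 0 := norm_ne_zero_iff.mp (by rw [hx]; exact one_ne_zero)
  obtain hx' | hy' := (norm_inner_eq_norm_tfae 𝕜 x y).out 0 1 |>.mp hxy
  · exact absurd hx' hx₀
  · rwa [inner_self_eq_norm_sq_to_K, hx, RCLike.ofReal_one, one_pow, div_one] at hy'

theorem norm_inner_pow_apply_eq_one {U : E →L[𝕜] E} {ψ : E} (hψ : ‖ψ‖ = 1)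
    (hUψ : ‖U ψ‖ = 1) (h : ‖⟪ψ, U ψ⟫_𝕜‖ = 1) (n : ℕ) : ‖⟪ψ, (U ^ n) ψ⟫_𝕜‖ = 1 := by
  set c := ⟪ψ, U ψ⟫_𝕜
  have hUc : U ψ = c • ψ := eq_inner_smul_of_norm_inner_eq_one hψ h hUψ
  have heigen : ∀ n : ℕ, (U ^ n) ψ = c ^ n • ψ := by
    intro n
    induction n with
    | zero => simp
    | succ n ih => rw [pow_succ', mul_apply_eq_comp, ih, map_smul, hUc, smul_smul, pow_succ]
  rw [heigen, inner_smul_right, inner_self_eq_norm_sq_to_K, hψ]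
  simp [h]

end CauchySchwarz

theorem limsup_eq_of_le_of_frequently_ge {α β : Type*} [ConditionallyCompleteLinearOrder β]
    {f : Filter α} {u : α → β} {a : β} (hle : ∀ x, u x ≤ a) (hge : ∃ᶠ x in f, a ≤ u x) :
    limsup u f = a :=
  le_antisymm (limsup_le_of_le (.of_frequently_ge hge) (.of_forall hle))
    (le_limsup_of_frequently_le hge (isBoundedUnder_of ⟨a, hle⟩))

theorem Rat.natCast_pow_den_rpow {q : ℚ} (hq : 0 ≤ q) (m : ℕ) :
    ((m : ℝ) ^ q.den) ^ (q : ℝ) = (m : ℝ) ^ q.num.toNat := by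
  have hnum : ((q.num.toNat : ℕ) : ℝ) = q.den * q := by
    rw [← Int.cast_natCast, Int.toNat_of_nonneg (Rat.num_nonneg.mpr hq), mul_comm]
    exact_mod_cast (Rat.mul_den_eq_num q).symm
  rw [← Real.rpow_natCast _ q.num.toNat, hnum, Real.rpow_mul (Nat.cast_nonneg m),
    Real.rpow_natCast]

section Propagator

variable {E : Type*} [NormedAddCommGroup E] [InnerProductSpace ℂ E] [CompleteSpace E]

noncomputable def propagator (H : E →L[ℂ] E) (τ : ℝ) : E →L[ℂ] E :=
  NormedSpace.exp (((-τ : ℂ) * Complex.I) • H)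

noncomputable def survivalProbability (H : E →L[ℂ] E) (ψ : E) (τ : ℝ) : ℝ :=
  ‖⟪ψ, propagator H τ ψ⟫_ℂ‖ ^ 2

variable (H : E →L[ℂ] E)

theorem propagator_natCast_mul (n : ℕ) (τ : ℝ) :
    propagator H (n * τ) = propagator H τ ^ n := by
  let : NormedAlgebra ℚ (E →L[ℂ] E) := .restrictScalars ℚ ℂ (E →L[ℂ] E)
  rw [propagator, propagator, ← NormedSpace.exp_nsmul, ← Nat.cast_smul_eq_nsmul ℂ, smul_smul]
  push_cast
  ring_nf

variable {H}

theorem star_propagator (hH : IsSelfAdjoint H) (τ : ℝ) :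
    star (propagator H τ) = propagator H (-τ) := by
  rw [propagator, propagator, NormedSpace.star_exp, star_smul, hH.star_eq]
  simp [Complex.conj_I]

theorem propagator_mem_unitary (hH : IsSelfAdjoint H) (τ : ℝ) :
    propagator H τ ∈ unitary (E →L[ℂ] E) := by
  let : NormedAlgebra ℚ (E →L[ℂ] E) := .restrictScalars ℚ ℂ (E →L[ℂ] E)
  refine NormedSpace.exp_mem_unitary_of_mem_skewAdjoint (hH.smul_mem_skewAdjoint ?_)
  simp [skewAdjoint.mem_iff, Complex.conj_I]

variable {ψ : E}

theorem survivalProbability_le_one (hH : IsSelfAdjoint H) (hψ : ‖ψ‖ = 1) (τ : ℝ) :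
    survivalProbability H ψ τ ≤ 1 := by
  have h := norm_inner_le_norm (𝕜 := ℂ) ψ (propagator H τ ψ)
  rw [ContinuousLinearMap.norm_map_of_mem_unitary (propagator_mem_unitary hH τ), hψ,
    one_mul] at h
  exact pow_le_one₀ (norm_nonneg _) h

theorem survivalProbability_neg (hH : IsSelfAdjoint H) (τ : ℝ) :
    survivalProbability H ψ (-τ) = survivalProbability H ψ τ := by
  rw [survivalProbability, survivalProbability, ← star_propagator hH,
    ContinuousLinearMap.star_eq_adjoint, ContinuousLinearMap.adjoint_inner_right,
    ← inner_conj_symm, Complex.norm_conj]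

theorem survivalProbability_natCast_mul_eq_one (hH : IsSelfAdjoint H) (hψ : ‖ψ‖ = 1) {τ : ℝ}
    (h : survivalProbability H ψ τ = 1) (n : ℕ) : survivalProbability H ψ (n * τ) = 1 := by
  rw [survivalProbability, pow_eq_one_iff_of_nonneg (norm_nonneg _) two_ne_zero] at h
  have hUψ : ‖propagator H τ ψ‖ = 1 := by
    rw [ContinuousLinearMap.norm_map_of_mem_unitary (propagator_mem_unitary hH τ), hψ]
  rw [survivalProbability, propagator_natCast_mul, norm_inner_pow_apply_eq_one hψ hUψ h,
    one_pow]

theorem survivalProbability_intCast_mul_eq_one (hH : IsSelfAdjoint H) (hψ : ‖ψ‖ = 1) {τ : ℝ}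
    (h : survivalProbability H ψ τ = 1) (k : ℤ) : survivalProbability H ψ (k * τ) = 1 := by
  obtain ⟨n, rfl | rfl⟩ := Int.eq_nat_or_neg k
  · exact_mod_cast survivalProbability_natCast_mul_eq_one hH hψ h n
  · rw [Int.cast_neg, Int.cast_natCast, neg_mul, survivalProbability_neg hH]
    exact survivalProbability_natCast_mul_eq_one hH hψ h n

end Propagator

theorem zeno_limsup_one_of_rational_exponent_general
    {E : Type*} [NormedAddCommGroup E] [InnerProductSpace ℂ E] [CompleteSpace E]
    (H : E →L[ℂ] E) (hH : IsSelfAdjoint H) (ψ : E) (hψ : ‖ψ‖ = 1)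
    (p : ℝ → ℝ)
    (hp : ∀ τ : ℝ, p τ =
      ‖(inner ℂ ψ ((NormedSpace.exp (((-τ : ℂ) * Complex.I) • H)) ψ) : ℂ)‖ ^ 2)
    (τ₀ : ℝ) (hret : p τ₀ = 1)
    (α : ℝ) (hα : 1 < α) (hαQ : ∃ q : ℚ, (q : ℝ) = α)
    (M : ℤ) :
    Filter.limsup (fun N : ℕ => p ((M : ℝ) * τ₀ * (N : ℝ) ^ (α - 1)) ^ N) atTop = 1 := by
  obtain rfl : p = survivalProbability H ψ := funext hp
  obtain ⟨q, rfl⟩ := hαQ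
  have hexp : (q : ℝ) - 1 = ((q - 1 : ℚ) : ℝ) := by push_cast; rfl
  have hexp_nonneg : 0 ≤ q - 1 := by exact_mod_cast (sub_pos.mpr hα).le
  refine limsup_eq_of_le_of_frequently_ge
    (fun N => pow_le_one₀ (pow_nonneg (norm_nonneg _) 2) (survivalProbability_le_one hH hψ _)) ?_
  refine (tendsto_pow_atTop (q - 1).den_ne_zero).frequently (.of_forall fun m => ?_)
  rw [Nat.cast_pow, hexp, Rat.natCast_pow_den_rpow hexp_nonneg, ← Nat.cast_pow,
    ← Int.cast_natCast, mul_right_comm, ← Int.cast_mul,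
    survivalProbability_intCast_mul_eq_one hH hψ hret, one_pow]

/-- If `p(τ₀) = 1` for some `τ₀ ≠ 0` and `α > 1` is rational, then for every integer `M`
the limsup of `p_{N,α}(Mτ₀) = p(Mτ₀·N^(α-1))^N` equals `1`. -/
theorem zeno_limsup_one_of_rational_exponent
    {E : Type*} [NormedAddCommGroup E] [InnerProductSpace ℂ E] [CompleteSpace E]
    (H : E →L[ℂ] E) (hH : IsSelfAdjoint H) (ψ : E) (hψ : ‖ψ‖ = 1)
    (p : ℝ → ℝ)
    (hp : ∀ τ : ℝ, p τ =
      ‖(inner ℂ ψ ((NormedSpace.exp (((-τ : ℂ) * Complex.I) • H)) ψ) : ℂ)‖ ^ 2)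
    (τ₀ : ℝ) (hτ₀ : τ₀ ≠ 0) (hret : p τ₀ = 1)
    (α : ℝ) (hα : 1 < α) (hαQ : ∃ q : ℚ, (q : ℝ) = α)
    (M : ℤ) :
    Filter.limsup (fun N : ℕ => p ((M : ℝ) * τ₀ * (N : ℝ) ^ (α - 1)) ^ N) atTop = 1 :=
  zeno_limsup_one_of_rational_exponent_general H hH ψ hψ p hp τ₀ hret α hα hαQ M
end

section
/- Let μ be a Borel probability measure on ℝ with ∫λ² dμ(λ) < ∞, mean m = ∫λ dμ and variance σ² > 0. Then |μ̂(t/√N)|^{2N} → exp(-σ²t²) as N → ∞ for every t ∈ ℝ, where μ̂(t) = ∫exp(-itλ)dμ(λ). -/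
/-!
Since `μ̂(s)` is the conjugate of the characteristic function `φ(s)`, it suffices to study
`‖φ(s)‖²`. The second-order Taylor expansion `φ(s) = 1 + i m s - M₂ s² / 2 + o(s²)` gives
`‖φ(s)‖² = (1 - M₂ s² / 2)² + m² s² + o(s²) = 1 - σ² s² + o(s²)`: the first-order terms only
enter through their square, which is what turns the second moment into the variance.
At `s = t / √N` this reads `1 - σ² t² / N + o(1 / N)`, and `(1 + a / N + o(1 / N)) ^ N → exp a`.
-/

open MeasureTheory Filter Complex Asymptotics ProbabilityTheory
open scoped Topology

namespace MeasureTheory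

variable {μ : Measure ℝ} [IsProbabilityMeasure μ]

lemma charFun_sub_taylor_two_isLittleO (hμ : MemLp id 2 μ) :
    (fun s : ℝ ↦
      charFun μ s - (((1 - (∫ x, x ^ 2 ∂μ) * s ^ 2 / 2 : ℝ) : ℂ) + ((∫ x, x ∂μ) * s : ℝ) * I))
      =o[𝓝 0] fun s ↦ s ^ 2 := by
  have h := taylor_isLittleO_univ (x₀ := 0) (contDiff_charFun hμ)
  simp_rw [taylorWithinEval_charFun_zero hμ, sub_zero] at h
  refine h.congr_left fun s ↦ ?_
  simp only [Finset.sum_range_succ, Finset.sum_range_zero, pow_zero, pow_one, mul_pow, I_sq,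
    integral_const, probReal_univ, smul_eq_mul]
  push_cast
  ring

lemma norm_sq_charFun_sub_isLittleO (hμ : MemLp id 2 μ) :
    (fun s : ℝ ↦ ‖charFun μ s‖ ^ 2 - (1 - Var[id; μ] * s ^ 2)) =o[𝓝 0] fun s ↦ s ^ 2 := by
  set M := ∫ x, x ^ 2 ∂μ
  set T : ℝ → ℂ := fun s ↦ ((1 - M * s ^ 2 / 2 : ℝ) : ℂ) + ((∫ x, x ∂μ) * s : ℝ) * I
  have hT (s : ℝ) : ‖T s‖ ^ 2 = 1 - Var[id; μ] * s ^ 2 + M ^ 2 / 4 * s ^ 4 := by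
    rw [variance_eq_sub hμ, Complex.sq_norm, normSq_add_mul_I]
    simp only [Pi.pow_apply, id_eq, M]
    ring
  have hbdd : (fun s : ℝ ↦ ‖charFun μ s‖ + ‖T s‖) =O[𝓝 0] fun _ ↦ (1 : ℝ) :=
    ((continuous_charFun.norm.add (by fun_prop : Continuous T).norm).tendsto 0).isBigO_one ℝ
  have hdiff : (fun s ↦ ‖charFun μ s‖ - ‖T s‖) =o[𝓝 0] fun s ↦ s ^ 2 :=
    (isBigO_of_le _ fun s ↦ abs_norm_sub_norm_le (charFun μ s) (T s))
      |>.trans_isLittleO (charFun_sub_taylor_two_isLittleO hμ)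
  have hquartic : (fun s : ℝ ↦ M ^ 2 / 4 * s ^ 4) =o[𝓝 0] fun s ↦ s ^ 2 := by
    refine IsLittleO.const_mul_left ?_ _
    simpa using isLittleO_pow_pow (𝕜 := ℝ) (m := 2) (n := 4) (by norm_num)
  -- `‖φ s‖² - (1 - Var s²) = (‖φ s‖ - ‖T s‖) (‖φ s‖ + ‖T s‖) + M² s⁴ / 4`
  refine (((hdiff.mul_isBigO hbdd).congr_right fun s ↦ mul_one _).add hquartic).congr_left
    fun s ↦ ?_
  linear_combination -hT s

lemma norm_integral_exp_neg_mul_I (μ : Measure ℝ) (s : ℝ) :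
    ‖∫ x : ℝ, exp (-I * s * x) ∂μ‖ = ‖charFun μ s‖ := by
  rw [← Complex.norm_conj (charFun μ s), ← charFun_neg, charFun_apply_real]
  push_cast
  ring_nf

end MeasureTheory

lemma Real.tendsto_pow_exp_of_isLittleO_sub_add_div {f : ℕ → ℝ} (t : ℝ)
    (hf : (fun n ↦ f n - (1 + t / n)) =o[atTop] fun n ↦ 1 / (n : ℝ)) :
    Tendsto (fun n ↦ f n ^ n) atTop (𝓝 (Real.exp t)) := by
  rw [← tendsto_ofReal_iff]
  push_cast
  refine Complex.tendsto_pow_exp_of_isLittleO_sub_add_div (t : ℂ) ?_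
  rw [← isLittleO_norm_norm] at hf ⊢
  convert hf using 2 with n n <;> rw [← Complex.norm_real] <;> push_cast <;> rfl

theorem fourier_gaussian_limit_general
    (μ : Measure ℝ) [IsProbabilityMeasure μ]
    (hmom : Integrable (fun lam : ℝ => lam ^ 2) μ)
    (m σsq : ℝ) (hm : m = ∫ lam : ℝ, lam ∂μ)
    (hσ : σsq = ∫ lam : ℝ, (lam - m) ^ 2 ∂μ)
    (t : ℝ) :
    Tendsto
      (fun N : ℕ =>
        ‖(∫ lam : ℝ, Complex.exp (-Complex.I * (t / Real.sqrt N) * lam) ∂μ)‖ ^ (2 * N))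
      atTop (nhds (Real.exp (-(σsq * t ^ 2)))) := by
  have hμ : MemLp id 2 μ := (memLp_two_iff_integrable_sq aestronglyMeasurable_id).2 hmom
  have hvar : Var[id; μ] = σsq := by rw [variance_eq_integral aemeasurable_id, hσ, hm]; rfl
  have hs : Tendsto (fun N : ℕ ↦ t / √N) atTop (𝓝 0) :=
    tendsto_const_nhds.div_atTop (Real.tendsto_sqrt_atTop.comp tendsto_natCast_atTop_atTop)
  have hsq (N : ℕ) : (t / √N) ^ 2 = t ^ 2 * (1 / N) := by
    rw [div_pow, Real.sq_sqrt N.cast_nonneg, mul_one_div]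
  have hexpand := (norm_sq_charFun_sub_isLittleO hμ).comp_tendsto hs
  simp only [Function.comp_def, hsq, hvar] at hexpand
  simp_rw [← ofReal_div, norm_integral_exp_neg_mul_I, pow_mul]
  refine Real.tendsto_pow_exp_of_isLittleO_sub_add_div _
    ((hexpand.trans_isBigO ((isBigO_refl _ _).const_mul_left _)).congr_left fun N ↦ ?_)
  ring

/-- Measure-theoretic form of the critical `α = 1/2` Zeno limit: if `μ` is a Borel
probability measure on `ℝ` with finite second moment, mean `m` and variance `σ² > 0`,
then `|μ̂(t/√N)|^(2N) → exp(-σ²t²)` for every `t`, where `μ̂(t) = ∫ exp(-itλ)dμ(λ)`. -/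
theorem fourier_gaussian_limit
    (μ : Measure ℝ) [IsProbabilityMeasure μ]
    (hmom : Integrable (fun lam : ℝ => lam ^ 2) μ)
    (m σsq : ℝ) (hm : m = ∫ lam : ℝ, lam ∂μ)
    (hσ : σsq = ∫ lam : ℝ, (lam - m) ^ 2 ∂μ) (hσpos : 0 < σsq)
    (t : ℝ) :
    Tendsto
      (fun N : ℕ =>
        ‖(∫ lam : ℝ, Complex.exp (-Complex.I * (t / Real.sqrt N) * lam) ∂μ)‖ ^ (2 * N))
      atTop (nhds (Real.exp (-(σsq * t ^ 2)))) :=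
  fourier_gaussian_limit_general μ hmom m σsq hm hσ t
end
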